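/- Let d, n, L, W ∈ ℕ with n ≥ 1, L ≥ 2, W ≥ 1, and R ≥ 1 a real number. Let σ : ℝ → ℝ be n-times continuously differentiable with ‖σ‖_{C^n} := max_{0 ≤ j ≤ n} sup_{s ∈ ℝ} |σ^{(j)}(s)| finite and ≥ 1. Let u_θ : ℝ^{d+1} → ℝ^{l_L} be a depth-L neural network u_θ = A_L ∘ (σ ∘ A_{L−1}) ∘ ⋯ ∘ (σ ∘ A₁), where each A_i : ℝ^{l_{i−1}} → ℝ^{l_i} is an affine map with l₀ = d+1, all widths l_i ≤ W, all matrix entries and bias entries lying in [−R, R], and σ applied componentwise. Then for every component index 1 ≤ j ≤ l_L, every multi-index α ∈ ℕ^{d+1} with |α| ≤ n, and every x ∈ [0,1]^{d+1}: |D^α (u_θ)_j(x)| ≤ 16^L (d+1)^{2n} (e² n⁴ W³ R^n ‖σ‖_{C^n})^{nL}. -/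

import Mathlib

/-!
Induction over the layers. If every derivative of order `1 ≤ i ≤ n` of each neuron of layer `k`
is bounded by `(cᵏ)ⁱ`, where `c = n ‖σ‖_{Cⁿ} W R`, then the next affine map multiplies this by at
most `W R ≤ (W R)ⁱ`, and the Faà di Bruno bound `‖Dⁱ(σ ∘ f)‖ ≤ i! ‖σ‖_{Cⁿ} Dⁱ` together with
`i! ≤ nⁱ` gives `(cᵏ⁺¹)ⁱ`. A partial derivative `D^α` is bounded by the norm of the `|α|`-th
Fréchet derivative, so the output is bounded by `(W R c^{L-1})ⁿ ≤ G^{nL}` for `|α| ≥ 1` and by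
`W R ‖σ‖_{Cⁿ} + R ≤ 2 G^{nL}` for `α = 0`, where `G = e² n⁴ W³ Rⁿ ‖σ‖_{Cⁿ} ≥ c`.
-/

open MeasureTheory Set

noncomputable section

/-- Partial derivative in the `i`-th coordinate direction. -/
def pdPi {m : ℕ} (i : Fin m) (g : (Fin m → ℝ) → ℝ) : (Fin m → ℝ) → ℝ :=
  fun x => fderiv ℝ g x (Pi.single i 1)

/-- Multi-index (classical) partial derivative `D^α g`. -/
def mderivPi {m : ℕ} (α : Fin m → ℕ) (g : (Fin m → ℝ) → ℝ) : (Fin m → ℝ) → ℝ :=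
  (List.finRange m).foldr (fun i h => (pdPi i)^[α i] h) g

/-- Forward pass through the first `k` layers of a feedforward network, with the
activation `σ` applied componentwise after each affine layer:
`fwd σ l A b k = (σ ∘ A_k) ∘ ⋯ ∘ (σ ∘ A₁)`. -/
def fwd (σ : ℝ → ℝ) (l : ℕ → ℕ)
    (A : ∀ i : ℕ, Matrix (Fin (l (i + 1))) (Fin (l i)) ℝ)
    (b : ∀ i : ℕ, Fin (l (i + 1)) → ℝ) :
    (k : ℕ) → (Fin (l 0) → ℝ) → (Fin (l k) → ℝ)
  | 0 => fun x => x
  | k + 1 => fun x j => σ ((A k).mulVec (fwd σ l A b k x) j + b k j)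

section PartialDerivatives

variable {m : ℕ}

theorem contDiff_pdPi {k : ℕ} {g : (Fin m → ℝ) → ℝ} (i : Fin m)
    (hg : ContDiff ℝ (k + 1 : ℕ) g) : ContDiff ℝ k (pdPi i g) :=
  (hg.fderiv_right (by norm_cast)).clm_apply contDiff_const

theorem norm_iteratedFDeriv_pdPi_le {k : ℕ} {g : (Fin m → ℝ) → ℝ} (i : Fin m)
    (hg : ContDiff ℝ (k + 1 : ℕ) g) (x : Fin m → ℝ) :
    ‖iteratedFDeriv ℝ k (pdPi i g) x‖ ≤ ‖iteratedFDeriv ℝ (k + 1) g x‖ :=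
  calc ‖iteratedFDeriv ℝ k (pdPi i g) x‖
      ≤ ‖(Pi.single i 1 : Fin m → ℝ)‖ * ‖iteratedFDeriv ℝ k (fderiv ℝ g) x‖ :=
        norm_iteratedFDeriv_clm_apply_const (hg.fderiv_right (by norm_cast)).contDiffAt le_rfl
    _ = ‖iteratedFDeriv ℝ (k + 1) g x‖ := by
        rw [Pi.norm_single, norm_one, one_mul, norm_iteratedFDeriv_fderiv]

theorem contDiff_iterate_pdPi (i : Fin m) (c : ℕ) {k : ℕ} {g : (Fin m → ℝ) → ℝ}
    (hg : ContDiff ℝ (k + c : ℕ) g) : ContDiff ℝ k ((pdPi i)^[c] g) := by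
  induction c generalizing g with
  | zero => exact hg
  | succ c ih => exact ih (contDiff_pdPi i hg)

theorem norm_iteratedFDeriv_iterate_pdPi_le (i : Fin m) (c : ℕ) {k : ℕ}
    {g : (Fin m → ℝ) → ℝ} (hg : ContDiff ℝ (k + c : ℕ) g) (x : Fin m → ℝ) :
    ‖iteratedFDeriv ℝ k ((pdPi i)^[c] g) x‖ ≤ ‖iteratedFDeriv ℝ (k + c) g x‖ := by
  induction c generalizing g with
  | zero => rfl
  | succ c ih =>
    exact (ih (contDiff_pdPi i hg)).trans (norm_iteratedFDeriv_pdPi_le i hg x)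

theorem contDiff_foldr_iterate_pdPi (α : Fin m → ℕ) (s : List (Fin m)) {k : ℕ}
    {g : (Fin m → ℝ) → ℝ} (hg : ContDiff ℝ (k + (s.map α).sum : ℕ) g) :
    ContDiff ℝ k (s.foldr (fun i h => (pdPi i)^[α i] h) g) := by
  induction s generalizing k with
  | nil => exact hg
  | cons i s ih =>
    refine contDiff_iterate_pdPi i (α i) (ih ?_)
    rwa [List.map_cons, List.sum_cons, ← add_assoc] at hg

theorem norm_iteratedFDeriv_foldr_iterate_pdPi_le (α : Fin m → ℕ) (s : List (Fin m)) {k : ℕ}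
    {g : (Fin m → ℝ) → ℝ} (hg : ContDiff ℝ (k + (s.map α).sum : ℕ) g) (x : Fin m → ℝ) :
    ‖iteratedFDeriv ℝ k (s.foldr (fun i h => (pdPi i)^[α i] h) g) x‖
      ≤ ‖iteratedFDeriv ℝ (k + (s.map α).sum) g x‖ := by
  induction s generalizing k with
  | nil => rfl
  | cons i s ih =>
    rw [List.map_cons, List.sum_cons, ← add_assoc] at hg ⊢
    exact (norm_iteratedFDeriv_iterate_pdPi_le i (α i)
      (contDiff_foldr_iterate_pdPi α s hg) x).trans (ih hg)

theorem abs_mderivPi_le {α : Fin m → ℕ} {g : (Fin m → ℝ) → ℝ}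
    (hg : ContDiff ℝ (∑ i, α i : ℕ) g) (x : Fin m → ℝ) :
    |mderivPi α g x| ≤ ‖iteratedFDeriv ℝ (∑ i, α i) g x‖ := by
  rw [Fin.sum_univ_def, ← zero_add ((List.finRange m).map α).sum] at hg ⊢
  simpa [mderivPi] using norm_iteratedFDeriv_foldr_iterate_pdPi_le α (List.finRange m) hg x

end PartialDerivatives

section Bounds

variable {E F G : Type*} [NormedAddCommGroup E] [NormedSpace ℝ E] [NormedAddCommGroup F]
  [NormedSpace ℝ F] [NormedAddCommGroup G] [NormedSpace ℝ G]

theorem ContinuousLinearMap.norm_iteratedFDeriv_le (f : E →L[ℝ] F) {i : ℕ} (hi : i ≠ 0)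
    (x : E) : ‖iteratedFDeriv ℝ i f x‖ ≤ ‖f‖ := by
  obtain ⟨i, rfl⟩ := Nat.exists_eq_succ_of_ne_zero hi
  rw [← norm_iteratedFDeriv_fderiv, show fderiv ℝ f = fun _ => f from funext fun _ => f.fderiv]
  rcases i with _ | i
  · rw [norm_iteratedFDeriv_zero]
  · rw [iteratedFDeriv_const_of_ne i.succ_ne_zero, Pi.zero_apply, norm_zero]
    exact norm_nonneg f

theorem norm_iteratedFDeriv_apply_le {ι : Type*} [Fintype ι] (p : ι) {i : ℕ} (hi : i ≠ 0)
    (x : ι → ℝ) : ‖iteratedFDeriv ℝ i (fun y : ι → ℝ => y p) x‖ ≤ 1 := by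
  let π : (ι → ℝ) →L[ℝ] ℝ := ContinuousLinearMap.proj p
  have hπ : ‖π‖ ≤ 1 := ContinuousLinearMap.opNorm_le_bound _ zero_le_one fun y => by
    simpa [π] using norm_le_pi_norm y p
  exact (π.norm_iteratedFDeriv_le hi x).trans hπ

theorem abs_dotProduct_add_le {ι : Type*} [Fintype ι] (a v : ι → ℝ) (c : ℝ) {R B : ℝ}
    (ha : ∀ p, |a p| ≤ R) (hv : ∀ p, |v p| ≤ B) (hc : |c| ≤ R) :
    |a ⬝ᵥ v + c| ≤ Fintype.card ι * (R * B) + R :=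
  calc |a ⬝ᵥ v + c| ≤ ∑ p, |a p * v p| + |c| :=
        (abs_add_le _ _).trans (add_le_add_left (Finset.abs_sum_le_sum_abs _ _) _)
    _ ≤ ∑ _p : ι, R * B + R := by
        gcongr with p
        rw [abs_mul]
        exact mul_le_mul (ha p) (hv p) (abs_nonneg _) ((abs_nonneg _).trans (ha p))
    _ = Fintype.card ι * (R * B) + R := by simp

theorem contDiff_dotProduct_add {ι : Type*} [Fintype ι] {N : WithTop ℕ∞} {f : E → ι → ℝ}
    (a : ι → ℝ) (c : ℝ) (hf : ∀ p, ContDiff ℝ N fun x => f x p) :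
    ContDiff ℝ N fun x => a ⬝ᵥ f x + c :=
  (ContDiff.sum fun p _ => contDiff_const.mul (hf p)).add contDiff_const

theorem norm_iteratedFDeriv_dotProduct_add_le {ι : Type*} [Fintype ι] {f : E → ι → ℝ}
    (a : ι → ℝ) (c : ℝ) {i : ℕ} (hi : i ≠ 0) (hf : ∀ p, ContDiff ℝ i fun x => f x p)
    {R B : ℝ} (ha : ∀ p, |a p| ≤ R) {x : E}
    (hB : ∀ p, ‖iteratedFDeriv ℝ i (fun x => f x p) x‖ ≤ B) :
    ‖iteratedFDeriv ℝ i (fun x => a ⬝ᵥ f x + c) x‖ ≤ Fintype.card ι * (R * B) := by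
  have hsum : ContDiff ℝ i fun x => ∑ p, a p * f x p :=
    ContDiff.sum fun p _ => contDiff_const.mul (hf p)
  change ‖iteratedFDeriv ℝ i ((fun x => ∑ p, a p * f x p) + fun _ => c) x‖ ≤ _
  rw [iteratedFDeriv_add_apply hsum.contDiffAt contDiff_const.contDiffAt,
    iteratedFDeriv_const_of_ne hi, Pi.zero_apply, add_zero,
    iteratedFDeriv_fun_sum_apply fun p _ => (contDiff_const.mul (hf p)).contDiffAt]
  calc ‖∑ p, iteratedFDeriv ℝ i (fun x => a p * f x p) x‖
      ≤ ∑ p, ‖iteratedFDeriv ℝ i (fun x => a p * f x p) x‖ := norm_sum_le _ _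
    _ ≤ ∑ _p : ι, R * B := by
        gcongr with p
        rw [show (fun x => a p * f x p) = fun x => a p • f x p from rfl,
          iteratedFDeriv_const_smul_apply' (hf p).contDiffAt, norm_smul,
          Real.norm_eq_abs]
        exact mul_le_mul (ha p) (hB p) (norm_nonneg _) ((abs_nonneg _).trans (ha p))
    _ = Fintype.card ι * (R * B) := by simp

theorem norm_iteratedFDeriv_comp_le_pow {g : F → G} {f : E → F} {n i : ℕ}
    (hg : ContDiff ℝ n g) (hf : ContDiff ℝ n f) (hi : 1 ≤ i) (hin : i ≤ n) {x : E} {C D : ℝ}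
    (hC : 1 ≤ C) (hgC : ∀ j ≤ n, ‖iteratedFDeriv ℝ j g (f x)‖ ≤ C)
    (hfD : ∀ j, 1 ≤ j → j ≤ n → ‖iteratedFDeriv ℝ j f x‖ ≤ D ^ j) :
    ‖iteratedFDeriv ℝ i (g ∘ f) x‖ ≤ (n * C * D) ^ i := by
  have hD : 0 ≤ D := by simpa using (norm_nonneg _).trans (hfD 1 le_rfl (hi.trans hin))
  have hfact : (i.factorial : ℝ) ≤ (n : ℝ) ^ i := by
    exact_mod_cast (Nat.factorial_le_pow i).trans (Nat.pow_le_pow_left hin i)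
  calc ‖iteratedFDeriv ℝ i (g ∘ f) x‖ ≤ i.factorial * C * D ^ i :=
        norm_iteratedFDeriv_comp_le hg hf (by exact_mod_cast hin) x
          (fun j hj => hgC j (hj.trans hin)) (fun j hj1 hj => hfD j hj1 (hj.trans hin))
    _ ≤ (n : ℝ) ^ i * C ^ i * D ^ i := by
        gcongr
        exact le_self_pow₀ hC (by omega)
    _ = (n * C * D) ^ i := by ring

end Bounds

section Constants

def layerGrowth (n W : ℕ) (R C : ℝ) : ℝ := n * C * W * R

variable {n L W : ℕ} {R C G : ℝ}

theorem one_le_layerGrowth (hn : 1 ≤ n) (hW : 1 ≤ W) (hR : 1 ≤ R) (hC : 1 ≤ C) :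
    1 ≤ layerGrowth n W R C := by
  have hn' : (1 : ℝ) ≤ n := by exact_mod_cast hn
  have hW' : (1 : ℝ) ≤ W := by exact_mod_cast hW
  exact one_le_mul_of_one_le_of_one_le (one_le_mul_of_one_le_of_one_le
    (one_le_mul_of_one_le_of_one_le hn' hC) hW') hR

theorem mul_le_layerGrowth (hn : 1 ≤ n) (hC : 1 ≤ C) (hR : 0 ≤ R) :
    W * R ≤ layerGrowth n W R C := by
  have hn' : (1 : ℝ) ≤ n := by exact_mod_cast hn
  calc (W * R : ℝ) = 1 * 1 * W * R := by ring
    _ ≤ layerGrowth n W R C := by unfold layerGrowth; gcongr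

theorem layerGrowth_le_exp_two_mul (hn : 1 ≤ n) (hW : 1 ≤ W) (hR : 1 ≤ R) (hC : 0 ≤ C) :
    layerGrowth n W R C ≤ Real.exp 1 ^ 2 * (n : ℝ) ^ 4 * (W : ℝ) ^ 3 * R ^ n * C := by
  have hn' : (1 : ℝ) ≤ n := by exact_mod_cast hn
  have hW' : (1 : ℝ) ≤ W := by exact_mod_cast hW
  calc layerGrowth n W R C = 1 * n * W * R * C := by unfold layerGrowth; ring
    _ ≤ Real.exp 1 ^ 2 * n ^ 4 * W ^ 3 * R ^ n * C := by
        gcongr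
        · exact one_le_pow₀ (Real.one_le_exp zero_le_one)
        · exact le_self_pow₀ hn' (by norm_num)
        · exact le_self_pow₀ hW' (by norm_num)
        · exact le_self_pow₀ hR (by omega)

theorem add_le_two_mul_pow (hn : 1 ≤ n) (hL : 1 ≤ L) (hW : 1 ≤ W) (hR : 1 ≤ R) (hC : 1 ≤ C)
    (hG : layerGrowth n W R C ≤ G) : W * R * C + R ≤ 2 * G ^ (n * L) := by
  have hW' : (1 : ℝ) ≤ W := by exact_mod_cast hW
  have hG1 : 1 ≤ G := (one_le_layerGrowth hn hW hR hC).trans hG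
  have hWRC : W * R * C ≤ G := calc
    (W * R * C : ℝ) ≤ W * R * C * n := le_mul_of_one_le_right (by positivity) (by exact_mod_cast hn)
    _ = layerGrowth n W R C := by unfold layerGrowth; ring
    _ ≤ G := hG
  have hR_le : R ≤ W * R * C := calc
    R = 1 * R * 1 := by ring
    _ ≤ W * R * C := by gcongr
  have hGpow : G ≤ G ^ (n * L) := le_self_pow₀ hG1 (by positivity)
  linarith

theorem pow_le_pow_mul_of_layerGrowth_le {i : ℕ} (hi : i ≤ n) (hn : 1 ≤ n) (hL : 1 ≤ L)
    (hW : 1 ≤ W) (hR : 1 ≤ R) (hC : 1 ≤ C) (hG : layerGrowth n W R C ≤ G) :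
    (W * R * layerGrowth n W R C ^ (L - 1)) ^ i ≤ G ^ (n * L) := by
  have hc := one_le_layerGrowth hn hW hR hC
  have hbase : 1 ≤ W * R * layerGrowth n W R C ^ (L - 1) :=
    one_le_mul_of_one_le_of_one_le (one_le_mul_of_one_le_of_one_le (by exact_mod_cast hW) hR)
      (one_le_pow₀ hc)
  calc (W * R * layerGrowth n W R C ^ (L - 1)) ^ i
      ≤ (W * R * layerGrowth n W R C ^ (L - 1)) ^ n := pow_le_pow_right₀ hbase hi
    _ ≤ (G * G ^ (L - 1)) ^ n := by
        have hG0 : 0 ≤ G := zero_le_one.trans (hc.trans hG)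
        gcongr
        exact (mul_le_layerGrowth hn hC (by linarith)).trans hG
    _ = G ^ (n * L) := by rw [← pow_succ', ← pow_mul, Nat.sub_add_cancel hL, mul_comm]

theorem le_of_le_two_mul_pow {d : ℕ} (hL : 1 ≤ L) (hG : 0 ≤ G) {X : ℝ}
    (hX : X ≤ 2 * G ^ (n * L)) : X ≤ 16 ^ L * ((d : ℝ) + 1) ^ (2 * n) * G ^ (n * L) := by
  refine hX.trans (mul_le_mul_of_nonneg_right ?_ (by positivity))
  calc (2 : ℝ) ≤ 16 ^ L * 1 := by
        rw [mul_one]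
        exact le_trans (by norm_num) (le_self_pow₀ (by norm_num) (by omega))
    _ ≤ 16 ^ L * ((d : ℝ) + 1) ^ (2 * n) := by
        gcongr
        exact one_le_pow₀ (by linarith [d.cast_nonneg (α := ℝ)])

end Constants

section Network

variable {σ : ℝ → ℝ} {l : ℕ → ℕ} {A : ∀ i : ℕ, Matrix (Fin (l (i + 1))) (Fin (l i)) ℝ}
  {b : ∀ i : ℕ, Fin (l (i + 1)) → ℝ}

variable (σ l A b) in
def preActivation (k : ℕ) (x : Fin (l 0) → ℝ) (j : Fin (l (k + 1))) : ℝ :=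
  (A k).mulVec (fwd σ l A b k x) j + b k j

theorem contDiff_fwd {N : WithTop ℕ∞} (hσ : ContDiff ℝ N σ) :
    ∀ k (p : Fin (l k)), ContDiff ℝ N fun x => fwd σ l A b k x p
  | 0, p => contDiff_apply ℝ ℝ p
  | k + 1, _ => hσ.comp (contDiff_dotProduct_add _ _ (contDiff_fwd hσ k))

theorem contDiff_preActivation {N : WithTop ℕ∞} (hσ : ContDiff ℝ N σ) (k : ℕ)
    (j : Fin (l (k + 1))) : ContDiff ℝ N fun x => preActivation σ l A b k x j :=
  contDiff_dotProduct_add _ _ (contDiff_fwd hσ k)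

theorem abs_fwd_le {C : ℝ} (hσC : ∀ s, |σ s| ≤ C) {k : ℕ} (hk : k ≠ 0) (x : Fin (l 0) → ℝ)
    (p : Fin (l k)) : |fwd σ l A b k x p| ≤ C := by
  obtain ⟨k, rfl⟩ := Nat.exists_eq_succ_of_ne_zero hk
  exact hσC _

theorem abs_preActivation_le {k W : ℕ} {R B : ℝ} (hW : l k ≤ W) (hR : 0 ≤ R) (hB : 0 ≤ B)
    (hA : ∀ j p, |A k j p| ≤ R) (hb : ∀ j, |b k j| ≤ R) {x : Fin (l 0) → ℝ}
    (hfwd : ∀ p, |fwd σ l A b k x p| ≤ B) (j : Fin (l (k + 1))) :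
    |preActivation σ l A b k x j| ≤ W * R * B + R :=
  calc |preActivation σ l A b k x j| ≤ l k * (R * B) + R :=
        (abs_dotProduct_add_le _ _ _ (hA j) hfwd (hb j)).trans_eq (by rw [Fintype.card_fin])
    _ ≤ W * R * B + R := by
        rw [mul_assoc]
        gcongr

theorem norm_iteratedFDeriv_preActivation_le {n k W : ℕ} {R B : ℝ} (hσ : ContDiff ℝ n σ)
    (hW : l k ≤ W) (hWR : 1 ≤ W * R) (hA : ∀ j p, |A k j p| ≤ R) (hB : 0 ≤ B) {i : ℕ}
    (hi : 1 ≤ i) (hin : i ≤ n) {x : Fin (l 0) → ℝ}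
    (hfwd : ∀ p, ‖iteratedFDeriv ℝ i (fun y => fwd σ l A b k y p) x‖ ≤ B ^ i)
    (j : Fin (l (k + 1))) :
    ‖iteratedFDeriv ℝ i (fun y => preActivation σ l A b k y j) x‖ ≤ (W * R * B) ^ i := by
  have hR : 0 ≤ R := (pos_of_mul_pos_right (one_pos.trans_le hWR) W.cast_nonneg).le
  calc ‖iteratedFDeriv ℝ i (fun y => preActivation σ l A b k y j) x‖ ≤ l k * (R * B ^ i) :=
        (norm_iteratedFDeriv_dotProduct_add_le _ _ (by omega)
          (fun p => (contDiff_fwd hσ k p).of_le (by exact_mod_cast hin)) (hA j) hfwd).trans_eq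
            (by rw [Fintype.card_fin])
    _ ≤ W * R * B ^ i := by
        rw [mul_assoc]
        gcongr
    _ ≤ (W * R) ^ i * B ^ i := by gcongr; exact le_self_pow₀ hWR (by omega)
    _ = (W * R * B) ^ i := (mul_pow _ _ _).symm

theorem norm_iteratedFDeriv_fwd_le {n K W : ℕ} {R C : ℝ} (hσ : ContDiff ℝ n σ) (hC : 1 ≤ C)
    (hσC : ∀ i ≤ n, ∀ s, ‖iteratedFDeriv ℝ i σ s‖ ≤ C) (hW : ∀ k < K, l k ≤ W)
    (hWR : 1 ≤ W * R) (hA : ∀ k < K, ∀ j p, |A k j p| ≤ R) (x : Fin (l 0) → ℝ) {k : ℕ}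
    (hk : k ≤ K) (p : Fin (l k)) {i : ℕ} (hi : 1 ≤ i) (hin : i ≤ n) :
    ‖iteratedFDeriv ℝ i (fun y => fwd σ l A b k y p) x‖ ≤ (layerGrowth n W R C ^ k) ^ i := by
  induction k generalizing i with
  | zero =>
    rw [pow_zero, one_pow]
    exact norm_iteratedFDeriv_apply_le p (by omega) x
  | succ k ih =>
    have hR : 0 ≤ R := (pos_of_mul_pos_right (one_pos.trans_le hWR) W.cast_nonneg).le
    have hc : 0 ≤ layerGrowth n W R C ^ k := by
      have : 0 ≤ C := zero_le_one.trans hC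
      unfold layerGrowth
      positivity
    calc ‖iteratedFDeriv ℝ i (σ ∘ fun y => preActivation σ l A b k y p) x‖
        ≤ (n * C * (W * R * layerGrowth n W R C ^ k)) ^ i :=
          norm_iteratedFDeriv_comp_le_pow hσ (contDiff_preActivation hσ k p) hi hin hC
            (fun j hj => hσC j hj _) fun j hj1 hj =>
              norm_iteratedFDeriv_preActivation_le hσ (hW k (by omega)) hWR (hA k (by omega))
                hc hj1 hj (fun q => ih (by omega) q hj1 hj) p
      _ = (layerGrowth n W R C ^ (k + 1)) ^ i := by unfold layerGrowth; ring

end Network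

theorem deep_network_derivative_bound_general
    (d n L W : ℕ) (hn : 1 ≤ n) (hL : 2 ≤ L) (hW : 1 ≤ W)
    (R : ℝ) (hR : 1 ≤ R)
    (σ : ℝ → ℝ) (hσ : ContDiff ℝ n σ)
    (Cσ : ℝ)
    (hCσdef : Cσ = sSup {r : ℝ | ∃ j ≤ n, ∃ s : ℝ, r = |iteratedDeriv j σ s|})
    (hCσbdd : BddAbove {r : ℝ | ∃ j ≤ n, ∃ s : ℝ, r = |iteratedDeriv j σ s|})
    (hCσ1 : 1 ≤ Cσ)
    (l : ℕ → ℕ)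
    (hlW : ∀ i ≤ L, l i ≤ W)
    (A : ∀ i : ℕ, Matrix (Fin (l (i + 1))) (Fin (l i)) ℝ)
    (bv : ∀ i : ℕ, Fin (l (i + 1)) → ℝ)
    (hA : ∀ i < L, ∀ (j : Fin (l (i + 1))) (k : Fin (l i)), |A i j k| ≤ R)
    (hb : ∀ i < L, ∀ j : Fin (l (i + 1)), |bv i j| ≤ R) :
    ∀ (j : Fin (l (L - 1 + 1))) (α : Fin (l 0) → ℕ), (∑ i, α i) ≤ n →
      ∀ x ∈ Icc (0 : Fin (l 0) → ℝ) 1,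
        |mderivPi α
            (fun y => (A (L - 1)).mulVec (fwd σ l A bv (L - 1) y) j + bv (L - 1) j) x|
          ≤ 16 ^ L * ((d : ℝ) + 1) ^ (2 * n) *
              (Real.exp 1 ^ 2 * (n : ℝ) ^ 4 * (W : ℝ) ^ 3 * R ^ n * Cσ) ^ (n * L) := by
  intro j α hα x _
  have hσC : ∀ i ≤ n, ∀ s, ‖iteratedFDeriv ℝ i σ s‖ ≤ Cσ := fun i hi s => by
    rw [norm_iteratedFDeriv_eq_norm_iteratedDeriv, Real.norm_eq_abs, hCσdef]
    exact le_csSup hCσbdd ⟨i, hi, s, rfl⟩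
  have hG := layerGrowth_le_exp_two_mul hn hW hR (zero_le_one.trans hCσ1)
  have hc := one_le_layerGrowth hn hW hR hCσ1
  have hG0 := (zero_le_one.trans hc).trans hG
  have hWR : (1 : ℝ) ≤ W * R := one_le_mul_of_one_le_of_one_le (by exact_mod_cast hW) hR
  have hu := contDiff_preActivation (A := A) (b := bv) hσ (L - 1) j
  refine (abs_mderivPi_le (hu.of_le (by exact_mod_cast hα)) x).trans
    (le_of_le_two_mul_pow (by omega) hG0 ?_)
  rcases Nat.eq_zero_or_pos (∑ i, α i) with hα0 | hαpos
  · have hσ0 : ∀ s, |σ s| ≤ Cσ := fun s => by simpa using hσC 0 n.zero_le s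
    have hlast : ∀ p, |fwd σ l A bv (L - 1) x p| ≤ Cσ := abs_fwd_le hσ0 (by omega) x
    rw [hα0, norm_iteratedFDeriv_zero, Real.norm_eq_abs]
    exact (abs_preActivation_le (hlW _ (by omega)) (by linarith) (by linarith)
      (hA _ (by omega)) (hb _ (by omega)) hlast j).trans
        (add_le_two_mul_pow hn (by omega) hW hR hCσ1 hG)
  · have hlast := fun p => norm_iteratedFDeriv_fwd_le (b := bv) (K := L - 1) hσ hCσ1 hσC
      (fun k _ => hlW k (by omega)) hWR (fun k _ => hA k (by omega)) x le_rfl p hαpos hα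
    exact (norm_iteratedFDeriv_preActivation_le hσ (hlW _ (by omega)) hWR (hA _ (by omega))
      (pow_nonneg (zero_le_one.trans hc) _) hαpos hα hlast j).trans
        ((pow_le_pow_mul_of_layerGrowth_le hα hn (by omega) hW hR hCσ1 hG).trans
          (le_mul_of_one_le_left (by positivity) one_le_two))

/-- Theorem (bound on the derivatives of a deep neural network, De Ryck et al.):
for a depth-`L` network `u_θ = A_L ∘ (σ ∘ A_{L-1}) ∘ ⋯ ∘ (σ ∘ A₁)` with widths `≤ W`,
entries in `[-R, R]` and `‖σ‖_{C^n} ≥ 1`, every component and every classical partial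
derivative of order `≤ n` on `[0,1]^{d+1}` is bounded by
`16^L (d+1)^{2n} (e² n⁴ W³ Rⁿ ‖σ‖_{C^n})^{nL}`. -/
theorem deep_network_derivative_bound
    (d n L W : ℕ) (hn : 1 ≤ n) (hL : 2 ≤ L) (hW : 1 ≤ W)
    (R : ℝ) (hR : 1 ≤ R)
    (σ : ℝ → ℝ) (hσ : ContDiff ℝ n σ)
    (Cσ : ℝ)
    (hCσdef : Cσ = sSup {r : ℝ | ∃ j ≤ n, ∃ s : ℝ, r = |iteratedDeriv j σ s|})
    (hCσbdd : BddAbove {r : ℝ | ∃ j ≤ n, ∃ s : ℝ, r = |iteratedDeriv j σ s|})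
    (hCσ1 : 1 ≤ Cσ)
    (l : ℕ → ℕ) (hl0 : l 0 = d + 1)
    (hlW : ∀ i ≤ L, l i ≤ W)
    (A : ∀ i : ℕ, Matrix (Fin (l (i + 1))) (Fin (l i)) ℝ)
    (bv : ∀ i : ℕ, Fin (l (i + 1)) → ℝ)
    (hA : ∀ i < L, ∀ (j : Fin (l (i + 1))) (k : Fin (l i)), |A i j k| ≤ R)
    (hb : ∀ i < L, ∀ j : Fin (l (i + 1)), |bv i j| ≤ R) :
    ∀ (j : Fin (l (L - 1 + 1))) (α : Fin (l 0) → ℕ), (∑ i, α i) ≤ n →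
      ∀ x ∈ Icc (0 : Fin (l 0) → ℝ) 1,
        |mderivPi α
            (fun y => (A (L - 1)).mulVec (fwd σ l A bv (L - 1) y) j + bv (L - 1) j) x|
          ≤ 16 ^ L * ((d : ℝ) + 1) ^ (2 * n) *
              (Real.exp 1 ^ 2 * (n : ℝ) ^ 4 * (W : ℝ) ^ 3 * R ^ n * Cσ) ^ (n * L) :=
  deep_network_derivative_bound_general d n L W hn hL hW R hR σ hσ Cσ hCσdef hCσbdd hCσ1 l hlW A bv
    hA hb
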